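/- Matching of the integer-order solutions at the compartment boundary: let q > 0, L > 0, σ ∈ ℝ, and define c_p(r) = σ/q − (σL/√q)·K₁(√q·L)·I₀(√q·r) and c_d(r) = (σL/√q)·I₁(√q·L)·K₀(√q·r) for r > 0. Then c_p(L) = c_d(L) and c_p'(L) = c_d'(L). -/

import Mathlib

/-!
Since `I₀' = I₁` and `K₀' = -K₁`, both matching conditions reduce to the Wronskian identity
`I₀(x) K₁(x) + I₁(x) K₀(x) = 1 / x`. Differentiating under the integral sign and integrating by
parts against `exp (x cos θ) sin θ` and `exp (-x cosh t) sinh t` gives `I₁' = I₀ - I₁ / x` and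
`K₁' = -K₀ - K₁ / x`, so `x (I₀ K₁ + I₁ K₀)` is constant on `(0, ∞)` (Abel's identity for the
modified Bessel equation). The constant is its limit at `0⁺`: there `I₀ → 1` and `I₁ → 0`, while
comparing `K₁` with `∫₀^∞ exp (-x sinh t) cosh t dt = 1 / x` gives `e^{-x} ≤ x K₁(x) ≤ 1`, and
`0 ≤ K₀ ≤ K₁`.
-/

open Real MeasureTheory Set

/-- The modified Bessel function of the first kind of order zero,
`I₀(x) = (1/π) ∫₀^π exp (x cos θ) dθ`. -/
noncomputable def I0 (x : ℝ) : ℝ := (1 / π) * ∫ θ in (0:ℝ)..π, Real.exp (x * Real.cos θ)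

/-- The modified Bessel function of the first kind of order one,
`I₁(x) = (1/π) ∫₀^π exp (x cos θ) cos θ dθ`. -/
noncomputable def I1 (x : ℝ) : ℝ :=
  (1 / π) * ∫ θ in (0:ℝ)..π, Real.exp (x * Real.cos θ) * Real.cos θ

/-- The modified Bessel function of the second kind of order zero,
`K₀(x) = ∫₀^∞ exp (−x cosh t) dt`. -/
noncomputable def K0 (x : ℝ) : ℝ := ∫ t in Ioi (0:ℝ), Real.exp (-x * Real.cosh t)

/-- The modified Bessel function of the second kind of order one,
`K₁(x) = ∫₀^∞ exp (−x cosh t) cosh t dt`. -/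
noncomputable def K1 (x : ℝ) : ℝ :=
  ∫ t in Ioi (0:ℝ), Real.exp (-x * Real.cosh t) * Real.cosh t

open Filter Topology

lemma tendsto_exp_neg_mul_atTop {c : ℝ} (hc : 0 < c) :
    Tendsto (fun t => exp (-c * t)) atTop (𝓝 0) :=
  tendsto_exp_atBot.comp (Tendsto.const_mul_atTop_of_neg (neg_lt_zero.2 hc) tendsto_id)

noncomputable def besselKMoment (k : ℕ) (x : ℝ) : ℝ :=
  ∫ t in Ioi (0:ℝ), exp (-x * cosh t) * cosh t ^ k

lemma exp_neg_mul_cosh_mul_pow_le (k : ℕ) {x t : ℝ} (hx : 0 < x) (ht : 0 ≤ t) :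
    exp (-x * cosh t) * cosh t ^ k ≤ k.factorial * (2 / x) ^ k * exp (-(x / 2) * t) := by
  obtain ⟨u, hu_def⟩ : ∃ u, u = x / 2 * cosh t := ⟨_, rfl⟩
  have hu : 0 ≤ u := by rw [hu_def]; positivity
  have hpow : u ^ k ≤ k.factorial * exp u := by
    have := pow_div_factorial_le_exp u hu k
    rwa [div_le_iff₀ (by positivity), mul_comm] at this
  have hcosh : cosh t ^ k = (2 / x) ^ k * u ^ k := by
    rw [← mul_pow, hu_def]; congr 1; field_simp
  have hsplit : exp (-x * cosh t) = exp (-u) * exp (-u) := by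
    rw [← exp_add, hu_def]; congr 1; ring
  have ht_le : x / 2 * t ≤ u := by
    rw [hu_def]; gcongr; exact (self_le_sinh_iff.2 ht).trans (sinh_lt_cosh t).le
  calc exp (-x * cosh t) * cosh t ^ k = (2 / x) ^ k * (u ^ k * exp (-u)) * exp (-u) := by
        rw [hsplit, hcosh]; ring
    _ ≤ (2 / x) ^ k * (k.factorial * exp u * exp (-u)) * exp (-u) := by gcongr
    _ = k.factorial * (2 / x) ^ k * exp (-u) := by
        rw [mul_assoc _ (exp u), ← exp_add, add_neg_cancel, exp_zero]; ring
    _ ≤ k.factorial * (2 / x) ^ k * exp (-(x / 2) * t) := by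
        gcongr; linarith

lemma integrableOn_exp_neg_mul_cosh_mul_pow (k : ℕ) {x : ℝ} (hx : 0 < x) :
    IntegrableOn (fun t => exp (-x * cosh t) * cosh t ^ k) (Ioi 0) := by
  refine Integrable.mono'
    ((exp_neg_integrableOn_Ioi 0 (half_pos hx)).const_mul (k.factorial * (2 / x) ^ k))
    (by fun_prop) ?_
  filter_upwards [ae_restrict_mem measurableSet_Ioi] with t ht
  rw [Real.norm_of_nonneg (by positivity)]
  exact exp_neg_mul_cosh_mul_pow_le k hx (le_of_lt ht)

lemma hasDerivAt_besselKMoment (k : ℕ) {x : ℝ} (hx : 0 < x) :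
    HasDerivAt (besselKMoment k) (-besselKMoment (k + 1) x) x := by
  have hball : Metric.ball x (x / 2) ∈ 𝓝 x := Metric.ball_mem_nhds x (half_pos hx)
  have key := hasDerivAt_integral_of_dominated_loc_of_deriv_le (μ := volume.restrict (Ioi 0))
    (F := fun y t => exp (-y * cosh t) * cosh t ^ k)
    (F' := fun y t => -(exp (-y * cosh t) * cosh t ^ (k + 1)))
    (bound := fun t => exp (-(x / 2) * cosh t) * cosh t ^ (k + 1)) hball
    (Eventually.of_forall fun y => by fun_prop) (integrableOn_exp_neg_mul_cosh_mul_pow k hx)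
    (by fun_prop) ?_ (integrableOn_exp_neg_mul_cosh_mul_pow (k + 1) (half_pos hx)) ?_
  · have := key.2
    rw [integral_neg] at this
    exact this
  · refine Eventually.of_forall fun t y hy => ?_
    have hxy : x / 2 < y := by
      have := (abs_lt.1 (Metric.mem_ball.1 hy)).1; linarith
    rw [norm_neg, Real.norm_of_nonneg (by positivity)]
    gcongr
  · refine Eventually.of_forall fun t y _ => ?_
    have := ((hasDerivAt_id y).neg.mul_const (cosh t)).exp.mul_const (cosh t ^ k)
    exact this.congr_deriv (by simp only [Pi.neg_apply, id]; ring)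

lemma mul_besselKMoment_two {x : ℝ} (hx : 0 < x) :
    x * besselKMoment 2 x = x * besselKMoment 0 x + besselKMoment 1 x := by
  set f : ℕ → ℝ → ℝ := fun k t => exp (-x * cosh t) * cosh t ^ k
  have hf : ∀ k, IntegrableOn (f k) (Ioi 0) := fun k => integrableOn_exp_neg_mul_cosh_mul_pow k hx
  have hg : ∀ t, HasDerivAt (fun t => exp (-x * cosh t) * sinh t)
      (f 1 t + x * f 0 t - x * f 2 t) t := by
    intro t
    have := ((hasDerivAt_cosh t).const_mul (-x)).exp.mul (hasDerivAt_sinh t)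
    refine this.congr_deriv ?_
    simp only [f, pow_zero, pow_one]
    linear_combination (x * exp (-x * cosh t)) * cosh_sq_sub_sinh_sq t
  have hlim : Tendsto (fun t => exp (-x * cosh t) * sinh t) atTop (𝓝 0) := by
    refine squeeze_zero_norm' ?_ (by simpa only [mul_zero] using
      (tendsto_exp_neg_mul_atTop (half_pos hx)).const_mul ((Nat.factorial 1 : ℝ) * (2 / x) ^ 1))
    filter_upwards [eventually_ge_atTop 0] with t ht
    rw [Real.norm_eq_abs, abs_mul, abs_of_pos (exp_pos _), abs_of_nonneg (sinh_nonneg_iff.2 ht)]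
    refine le_trans ?_ (exp_neg_mul_cosh_mul_pow_le 1 hx ht)
    gcongr
    rw [pow_one]; exact (sinh_lt_cosh t).le
  have hf0 : IntegrableOn (fun t => x * f 0 t) (Ioi 0) := (hf 0).const_mul x
  have hf10 : IntegrableOn (fun t => f 1 t + x * f 0 t) (Ioi 0) := (hf 1).add hf0
  have hf2 : IntegrableOn (fun t => x * f 2 t) (Ioi 0) := (hf 2).const_mul x
  have := integral_Ioi_of_hasDerivAt_of_tendsto' (fun t _ => hg t) (hf10.sub hf2) hlim
  rw [integral_sub hf10 hf2, integral_add (hf 1) hf0, integral_const_mul,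
    integral_const_mul] at this
  simp only [sinh_zero, mul_zero, sub_zero] at this
  simp only [besselKMoment]
  linarith

noncomputable def besselIMoment (k : ℕ) (x : ℝ) : ℝ :=
  ∫ θ in (0:ℝ)..π, exp (x * cos θ) * cos θ ^ k

lemma hasDerivAt_besselIMoment (k : ℕ) (x : ℝ) :
    HasDerivAt (besselIMoment k) (besselIMoment (k + 1) x) x := by
  have key := intervalIntegral.hasDerivAt_integral_of_dominated_loc_of_deriv_le
    (F := fun y θ => exp (y * cos θ) * cos θ ^ k)
    (F' := fun y θ => exp (y * cos θ) * cos θ ^ (k + 1)) (a := 0) (b := π)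
    (bound := fun _ => exp (|x| + 1)) (Metric.ball_mem_nhds x one_pos)
    (Eventually.of_forall fun y => by fun_prop)
    ((by fun_prop : Continuous fun θ => exp (x * cos θ) * cos θ ^ k).intervalIntegrable 0 π)
    (by fun_prop) ?_ (intervalIntegrable_const (μ := volume)) ?_
  · exact key.2
  · refine Eventually.of_forall fun θ _ y hy => ?_
    have hy' : |y| ≤ |x| + 1 := by
      linarith [abs_sub_abs_le_abs_sub y x, (Real.dist_eq y x ▸ Metric.mem_ball.1 hy : |y - x| < 1)]
    have hcos : |cos θ| ≤ 1 := abs_cos_le_one θ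
    rw [norm_mul, norm_pow, Real.norm_of_nonneg (exp_pos _).le, Real.norm_eq_abs]
    calc exp (y * cos θ) * |cos θ| ^ (k + 1) ≤ exp (|x| + 1) * 1 := by
          gcongr
          · calc y * cos θ ≤ |y * cos θ| := le_abs_self _
              _ = |y| * |cos θ| := abs_mul _ _
              _ ≤ (|x| + 1) * 1 := by gcongr
              _ = |x| + 1 := mul_one _
          · exact pow_le_one₀ (abs_nonneg _) hcos
      _ = exp (|x| + 1) := mul_one _
  · refine Eventually.of_forall fun θ _ y _ => ?_
    have := ((hasDerivAt_id y).mul_const (cos θ)).exp.mul_const (cos θ ^ k)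
    exact this.congr_deriv (by simp only [id]; ring)

lemma mul_besselIMoment_two (x : ℝ) :
    x * besselIMoment 2 x = x * besselIMoment 0 x - besselIMoment 1 x := by
  set f : ℕ → ℝ → ℝ := fun k θ => exp (x * cos θ) * cos θ ^ k
  have hf : ∀ k, IntervalIntegrable (f k) volume 0 π := fun k =>
    (by fun_prop : Continuous (f k)).intervalIntegrable 0 π
  have hg : ∀ θ, HasDerivAt (fun θ => exp (x * cos θ) * sin θ)
      (f 1 θ - x * f 0 θ + x * f 2 θ) θ := by
    intro θ
    have := ((hasDerivAt_cos θ).const_mul x).exp.mul (hasDerivAt_sin θ)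
    refine this.congr_deriv ?_
    simp only [f, pow_zero, pow_one]
    linear_combination (-x * exp (x * cos θ)) * sin_sq_add_cos_sq θ
  have hf0 : IntervalIntegrable (fun θ => x * f 0 θ) volume 0 π := (hf 0).const_mul x
  have hf10 : IntervalIntegrable (fun θ => f 1 θ - x * f 0 θ) volume 0 π := (hf 1).sub hf0
  have hf2 : IntervalIntegrable (fun θ => x * f 2 θ) volume 0 π := (hf 2).const_mul x
  have := intervalIntegral.integral_eq_sub_of_hasDerivAt (fun θ _ => hg θ) (hf10.add hf2)
  rw [intervalIntegral.integral_add hf10 hf2, intervalIntegral.integral_sub (hf 1) hf0,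
    intervalIntegral.integral_const_mul, intervalIntegral.integral_const_mul] at this
  simp only [sin_zero, sin_pi, mul_zero, sub_zero] at this
  simp only [besselIMoment]
  linarith

lemma I0_eq_besselIMoment : I0 = fun x => 1 / π * besselIMoment 0 x := by
  ext x; simp [I0, besselIMoment]

lemma I1_eq_besselIMoment : I1 = fun x => 1 / π * besselIMoment 1 x := by
  ext x; simp [I1, besselIMoment]

lemma K0_eq_besselKMoment : K0 = besselKMoment 0 := by
  ext x; simp [K0, besselKMoment]

lemma K1_eq_besselKMoment : K1 = besselKMoment 1 := by
  ext x; simp [K1, besselKMoment]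

lemma hasDerivAt_I0 (x : ℝ) : HasDerivAt I0 (I1 x) x := by
  rw [I0_eq_besselIMoment, I1_eq_besselIMoment]
  exact (hasDerivAt_besselIMoment 0 x).const_mul _

lemma hasDerivAt_I1 {x : ℝ} (hx : x ≠ 0) : HasDerivAt I1 (I0 x - I1 x / x) x := by
  rw [I0_eq_besselIMoment, I1_eq_besselIMoment]
  refine (hasDerivAt_besselIMoment 1 x).const_mul _ |>.congr_deriv ?_
  have hM2 : besselIMoment 2 x = besselIMoment 0 x - besselIMoment 1 x / x := by
    field_simp; linarith [mul_besselIMoment_two x]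
  simp only [Nat.reduceAdd, hM2]
  ring

lemma hasDerivAt_K0 {x : ℝ} (hx : 0 < x) : HasDerivAt K0 (-K1 x) x := by
  rw [K0_eq_besselKMoment, K1_eq_besselKMoment]
  exact hasDerivAt_besselKMoment 0 hx

lemma hasDerivAt_K1 {x : ℝ} (hx : 0 < x) : HasDerivAt K1 (-K0 x - K1 x / x) x := by
  rw [K0_eq_besselKMoment, K1_eq_besselKMoment]
  refine (hasDerivAt_besselKMoment 1 hx).congr_deriv ?_
  have hM2 : besselKMoment 2 x = besselKMoment 0 x + besselKMoment 1 x / x := by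
    field_simp; linarith [mul_besselKMoment_two hx]
  simp only [Nat.reduceAdd, hM2]
  ring

/-- `x` times minus the Wronskian `I₀ K₀' - I₀' K₀` of the modified Bessel equation. -/
noncomputable def scaledWronskian (x : ℝ) : ℝ := x * (I0 x * K1 x + I1 x * K0 x)

lemma hasDerivAt_scaledWronskian {x : ℝ} (hx : 0 < x) : HasDerivAt scaledWronskian 0 x := by
  have := (hasDerivAt_id x).mul (((hasDerivAt_I0 x).mul (hasDerivAt_K1 hx)).add
    ((hasDerivAt_I1 hx.ne').mul (hasDerivAt_K0 hx)))
  refine this.congr_deriv ?_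
  simp only [id, Pi.add_apply, Pi.mul_apply]
  field_simp
  ring

lemma integral_exp_neg_mul_sinh_mul_cosh {x : ℝ} (hx : 0 < x) :
    IntegrableOn (fun t => exp (-x * sinh t) * cosh t) (Ioi 0) ∧
      ∫ t in Ioi (0:ℝ), exp (-x * sinh t) * cosh t = 1 / x := by
  have hg : ∀ t ∈ Ici (0:ℝ), HasDerivAt (fun t => -exp (-x * sinh t) / x)
      (exp (-x * sinh t) * cosh t) t := fun t _ => by
    refine (((hasDerivAt_sinh t).const_mul (-x)).exp.neg.div_const x).congr_deriv ?_
    field_simp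
  have hpos : ∀ t ∈ Ioi (0:ℝ), 0 ≤ exp (-x * sinh t) * cosh t := fun t _ => by positivity
  have hsinh : Tendsto sinh atTop atTop :=
    tendsto_atTop_mono' atTop ((eventually_ge_atTop 0).mono fun _ => self_le_sinh_iff.2) tendsto_id
  have hlim : Tendsto (fun t => -exp (-x * sinh t) / x) atTop (𝓝 0) := by
    simpa using ((tendsto_exp_neg_mul_atTop hx).comp hsinh).neg.div_const x
  refine ⟨integrableOn_Ioi_deriv_of_nonneg' hg hpos hlim, ?_⟩
  rw [integral_Ioi_of_hasDerivAt_of_nonneg' hg hpos hlim, sinh_zero, mul_zero, exp_zero]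
  ring

lemma integrableOn_exp_neg_mul_cosh_mul_cosh {x : ℝ} (hx : 0 < x) :
    IntegrableOn (fun t => exp (-x * cosh t) * cosh t) (Ioi 0) := by
  simpa only [pow_one] using integrableOn_exp_neg_mul_cosh_mul_pow 1 hx

lemma K1_le_inv {x : ℝ} (hx : 0 < x) : K1 x ≤ 1 / x := by
  obtain ⟨hint, hval⟩ := integral_exp_neg_mul_sinh_mul_cosh hx
  rw [← hval, K1]
  refine setIntegral_mono_on (integrableOn_exp_neg_mul_cosh_mul_cosh hx) hint measurableSet_Ioi
    fun t _ => ?_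
  gcongr ?_ * _
  exact exp_le_exp.2 (by nlinarith [sinh_lt_cosh t])

lemma exp_neg_div_le_K1 {x : ℝ} (hx : 0 < x) : exp (-x) / x ≤ K1 x := by
  obtain ⟨hint, hval⟩ := integral_exp_neg_mul_sinh_mul_cosh hx
  rw [div_eq_mul_one_div, ← hval, ← integral_const_mul, K1]
  refine setIntegral_mono_on (hint.const_mul _) (integrableOn_exp_neg_mul_cosh_mul_cosh hx)
    measurableSet_Ioi fun t ht => ?_
  have hcosh : cosh t ≤ 1 + sinh t := by
    have := cosh_sub_sinh t
    linarith [exp_le_one_iff.2 (neg_nonpos.2 (le_of_lt ht))]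
  rw [← mul_assoc, ← exp_add]
  gcongr
  nlinarith

lemma K0_nonneg (x : ℝ) : 0 ≤ K0 x :=
  setIntegral_nonneg measurableSet_Ioi fun _ _ => (exp_pos _).le

lemma K0_le_K1 {x : ℝ} (hx : 0 < x) : K0 x ≤ K1 x := by
  rw [K0_eq_besselKMoment, K1_eq_besselKMoment]
  refine setIntegral_mono_on (integrableOn_exp_neg_mul_cosh_mul_pow 0 hx)
    (integrableOn_exp_neg_mul_cosh_mul_pow 1 hx) measurableSet_Ioi fun t _ => ?_
  rw [pow_zero, pow_one]
  gcongr
  exact one_le_cosh t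

lemma I0_zero : I0 0 = 1 := by
  simp [I0]

lemma I1_zero : I1 0 = 0 := by
  simp [I1, integral_cos]

lemma continuous_I1 : Continuous I1 := by
  rw [I1_eq_besselIMoment]
  exact continuous_const.mul
    (continuous_iff_continuousAt.2 fun x => (hasDerivAt_besselIMoment 1 x).continuousAt)

lemma tendsto_mul_K1 : Tendsto (fun x => x * K1 x) (𝓝[>] 0) (𝓝 1) := by
  have hexp : Tendsto (fun x => exp (-x)) (𝓝[>] 0) (𝓝 1) :=
    ((by fun_prop : Continuous fun x : ℝ => exp (-x)).tendsto' 0 1 (by simp)).mono_left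
      nhdsWithin_le_nhds
  refine tendsto_of_tendsto_of_tendsto_of_le_of_le' hexp tendsto_const_nhds ?_ ?_
  · filter_upwards [self_mem_nhdsWithin] with x hx
    have := exp_neg_div_le_K1 hx
    rwa [div_le_iff₀' hx] at this
  · filter_upwards [self_mem_nhdsWithin] with x hx
    have := K1_le_inv hx
    rwa [le_div_iff₀' hx] at this

lemma tendsto_scaledWronskian_nhdsGT_zero : Tendsto scaledWronskian (𝓝[>] 0) (𝓝 1) := by
  have hI0 : Tendsto I0 (𝓝[>] 0) (𝓝 1) := by
    have := (hasDerivAt_I0 0).continuousAt.tendsto.mono_left (nhdsWithin_le_nhds (s := Ioi 0))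
    rwa [I0_zero] at this
  have hI1 : Tendsto I1 (𝓝[>] 0) (𝓝 0) := by
    have := (continuous_I1.tendsto 0).mono_left (nhdsWithin_le_nhds (s := Ioi 0))
    rwa [I1_zero] at this
  have hK0 : IsBoundedUnder (· ≤ ·) (𝓝[>] 0) (fun x => ‖x * K0 x‖) := by
    refine isBoundedUnder_of_eventually_le (a := 1) ?_
    filter_upwards [self_mem_nhdsWithin] with x (hx : 0 < x)
    rw [Real.norm_of_nonneg (mul_nonneg hx.le (K0_nonneg x))]
    calc x * K0 x ≤ x * K1 x := by gcongr; exact K0_le_K1 hx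
      _ ≤ x * (1 / x) := by gcongr; exact K1_le_inv hx
      _ = 1 := by field_simp
  have := (hI0.mul tendsto_mul_K1).add (hI1.zero_mul_isBoundedUnder_le hK0)
  rw [mul_one, add_zero] at this
  exact this.congr fun x => by simp only [scaledWronskian]; ring

theorem I0_mul_K1_add_I1_mul_K0 {x : ℝ} (hx : 0 < x) : I0 x * K1 x + I1 x * K0 x = 1 / x := by
  have hconst : ∀ y ∈ Ioi (0:ℝ), scaledWronskian y = scaledWronskian x := fun y hy =>
    isOpen_Ioi.is_const_of_deriv_eq_zero isPreconnected_Ioi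
      (fun z hz => (hasDerivAt_scaledWronskian hz).differentiableAt.differentiableWithinAt)
      (fun z hz => (hasDerivAt_scaledWronskian hz).deriv) hy hx
  have hW : scaledWronskian x = 1 := tendsto_nhds_unique
    (tendsto_const_nhds.congr' (eventuallyEq_nhdsWithin_of_eqOn fun y hy => (hconst y hy).symm))
    tendsto_scaledWronskian_nhdsGT_zero
  rw [eq_div_iff hx.ne', mul_comm]
  exact hW

/-- Matching of the integer-order solutions at the compartment boundary: with
`c_p(r) = σ/q − (σL/√q)·K₁(√q·L)·I₀(√q·r)` and `c_d(r) = (σL/√q)·I₁(√q·L)·K₀(√q·r)`,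
one has `c_p(L) = c_d(L)` and `c_p'(L) = c_d'(L)`. -/
theorem matching_at_boundary (q L σ : ℝ) (hq : 0 < q) (hL : 0 < L)
    (cp cd : ℝ → ℝ)
    (hcp : ∀ r, cp r =
      σ / q - (σ * L / Real.sqrt q) * K1 (Real.sqrt q * L) * I0 (Real.sqrt q * r))
    (hcd : ∀ r, cd r =
      (σ * L / Real.sqrt q) * I1 (Real.sqrt q * L) * K0 (Real.sqrt q * r)) :
    cp L = cd L ∧ deriv cp L = deriv cd L := by
  set s := Real.sqrt q
  have hs : 0 < s := Real.sqrt_pos.2 hq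
  have hsq : s * s = q := Real.mul_self_sqrt hq.le
  have hsL : 0 < s * L := mul_pos hs hL
  have hW := I0_mul_K1_add_I1_mul_K0 hsL
  obtain rfl : cp = _ := funext hcp
  obtain rfl : cd = _ := funext hcd
  constructor
  · have h : σ * L / s * (I0 (s * L) * K1 (s * L) + I1 (s * L) * K0 (s * L)) = σ / q := by
      rw [hW, ← hsq]; field_simp
    linear_combination -h
  · have hI := (hasDerivAt_I0 (s * L)).comp L ((hasDerivAt_id L).const_mul s)
    have hK := (hasDerivAt_K0 hsL).comp L ((hasDerivAt_id L).const_mul s)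
    have hcp' : HasDerivAt (fun r => σ / q - σ * L / s * K1 (s * L) * I0 (s * r)) _ L :=
      (hI.const_mul _).const_sub _
    have hcd' : HasDerivAt (fun r => σ * L / s * I1 (s * L) * K0 (s * r)) _ L := hK.const_mul _
    rw [hcp'.deriv, hcd'.deriv]
    ring
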